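/- Let A and B be dual degenerate (n+1)-simplex configurations in R^n with common affine dependence coefficients α (all nonzero, ∑ α_i = 0, ∑ α_i A_i = 0 = ∑ α_i B_i). Let f(x)/x be the characteristic polynomial of C_2^T D C_1 and g(x)/x the characteristic polynomial of E_2^T D E_1 (matrices as defined from A, B, α). If the roots of f(x)/x are λ_1, ..., λ_n (with multiplicity, over C), then there exists a nonzero constant c such that the roots of g(x)/x are c/λ_1, ..., c/λ_n. In particular, for each 0 ≤ i ≤ n, the coefficient of x^i in f(x)/x vanishes if and only if the coefficient of x^{n-i} in g(x)/x vanishes. -/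

import Mathlib

/-!
The duality relations and the affine dependence `∑ αₖ (Aₖ - A_p) = 0` make `D C₁ E₂ᵀ` and
`D E₁ C₂ᵀ` scalar matrices: pairing the dependence with `B_i - B_q` kills every term except
`k = i` and `k = q`, and the surviving `k = q` term does not depend on `i`. Hence `M N = c • 1`
with `M` invertible, i.e. `N = c • M⁻¹`. The characteristic polynomial of `M⁻¹` is a constant
multiple of the reverse of that of `M`, and multiplying a matrix by `c` multiplies the roots of
its characteristic polynomial by `c`; this gives both the roots `c / λ` and the correspondence
between the coefficients of `x^i` and `x^(n-i)`.
-/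

open Finset Matrix Polynomial

namespace Polynomial

variable {K : Type*} [Field K]

lemma reverse_X_sub_C {a : K} (ha : a ≠ 0) : (X - C a).reverse = C (-a) * (X - C a⁻¹) := by
  rw [sub_eq_add_neg, ← C_neg, reverse_add_C, ← one_mul X, reverse_mul_X, ← C_1, reverse_C,
    mul_sub, ← C_mul, neg_mul, mul_inv_cancel₀ ha]
  simp only [one_mul, natDegree_X, pow_one, C_neg, C_1]
  ring

lemma roots_reverse_prod_X_sub_C {s : Multiset K} (hs : 0 ∉ s) :
    (s.map (X - C ·)).prod.reverse.roots = s.map (·⁻¹) := by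
  induction s using Multiset.induction_on with
  | empty =>
    rw [Multiset.map_zero, Multiset.prod_zero, ← C_1, reverse_C, roots_C, Multiset.map_zero]
  | cons a s ih =>
    rw [Multiset.mem_cons, not_or] at hs
    have ha : a ≠ 0 := Ne.symm hs.1
    have hne : (X - C a).reverse * (s.map (X - C ·)).prod.reverse ≠ 0 :=
      mul_ne_zero (reverse_eq_zero.not.2 (X_sub_C_ne_zero a)) (reverse_eq_zero.not.2
        (monic_multiset_prod_of_monic _ _ fun _ _ => monic_X_sub_C _).ne_zero)
    rw [Multiset.map_cons, Multiset.prod_cons, reverse_mul_of_domain, roots_mul hne, ih hs.2,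
      reverse_X_sub_C ha, roots_C_mul _ (neg_ne_zero.2 ha), roots_X_sub_C, Multiset.map_cons,
      Multiset.singleton_add]

end Polynomial

namespace Matrix

variable {m K : Type*} [Fintype m] [DecidableEq m] [Field K]

lemma charpoly_smul [Infinite K] (A : Matrix m m K) {c : K} (hc : c ≠ 0) :
    (c • A).charpoly = A.charpoly.scaleRoots c := by
  refine Polynomial.funext fun x => ?_
  rw [← mul_div_cancel₀ x hc, scaleRoots_eval_mul, eval_charpoly, eval_charpoly,
    charpoly_natDegree_eq_dim, ← det_smul, smul_sub]
  simp [scalar_apply, ← diagonal_smul, Pi.smul_def]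

lemma charpoly_inv_eq_C_mul_reverse {M : Matrix m m K} (hM : IsUnit M) :
    M⁻¹.charpoly = C ((-1) ^ Fintype.card m * M.det⁻¹) * M.charpoly.reverse := by
  rw [charpoly_inv M hM, reverse_charpoly]
  simp [Ring.inverse_eq_inv']

lemma coeff_charpoly_inv {M : Matrix m m K} (hM : IsUnit M) {j : ℕ} (hj : j ≤ Fintype.card m) :
    M⁻¹.charpoly.coeff j
      = (-1) ^ Fintype.card m * M.det⁻¹ * M.charpoly.coeff (Fintype.card m - j) := by
  rw [charpoly_inv_eq_C_mul_reverse hM, coeff_C_mul, coeff_reverse, charpoly_natDegree_eq_dim,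
    revAt_le hj]

lemma roots_charpoly_inv [IsAlgClosed K] {M : Matrix m m K} (hM : IsUnit M) :
    M⁻¹.charpoly.roots = M.charpoly.roots.map (·⁻¹) := by
  have hdet : M.det ≠ 0 := ((isUnit_iff_isUnit_det M).1 hM).ne_zero
  have hroots : 0 ∉ M.charpoly.roots := by
    rw [← Multiset.prod_eq_zero_iff, ← det_eq_prod_roots_charpoly]
    exact hdet
  rw [charpoly_inv_eq_C_mul_reverse hM, roots_C_mul _ (by simp [hdet])]
  conv_lhs => rw [(IsAlgClosed.splits M.charpoly).eq_prod_roots_of_monic M.charpoly_monic]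
  exact roots_reverse_prod_X_sub_C hroots

variable {M N : Matrix m m K} {c : K}

lemma eq_smul_inv_of_mul_eq_smul_one (hM : IsUnit M) (h : M * N = c • 1) : N = c • M⁻¹ := by
  rw [← nonsing_inv_mul_cancel_left M N ((isUnit_iff_isUnit_det M).1 hM), h, mul_smul_one]

lemma roots_charpoly_of_mul_eq_smul_one [IsAlgClosed K] (hM : IsUnit M) (hc : c ≠ 0)
    (h : M * N = c • 1) : N.charpoly.roots = M.charpoly.roots.map (c / ·) := by
  rw [eq_smul_inv_of_mul_eq_smul_one hM h, charpoly_smul _ hc,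
    roots_scaleRoots _ (isUnit_iff_ne_zero.2 hc), roots_charpoly_inv hM, Multiset.map_map]
  simp only [Function.comp_def, div_eq_mul_inv]

lemma coeff_charpoly_eq_zero_iff_of_mul_eq_smul_one [Infinite K] (hM : IsUnit M) (hc : c ≠ 0)
    (h : M * N = c • 1) {j : ℕ} (hj : j ≤ Fintype.card m) :
    N.charpoly.coeff j = 0 ↔ M.charpoly.coeff (Fintype.card m - j) = 0 := by
  have hdet : M.det ≠ 0 := ((isUnit_iff_isUnit_det M).1 hM).ne_zero
  rw [eq_smul_inv_of_mul_eq_smul_one hM h, charpoly_smul _ hc, coeff_scaleRoots,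
    charpoly_natDegree_eq_dim, coeff_charpoly_inv hM hj]
  simp [hc, hdet]

lemma map_mul_map_eq_smul_one {L : Type*} [Field L] (f : K →+* L) (h : M * N = c • 1) :
    M.map f * N.map f = f c • 1 := by
  rw [← Matrix.map_mul, h]
  ext i j
  by_cases hij : i = j <;> simp [hij]

end Matrix

lemma IsUnit.mul_eq_smul_one_of_mul_eq_smul_one {R A : Type*} [Monoid A] [SMul R A]
    [IsScalarTower R A A] [SMulCommClass R A A] {X Y : A} {δ : R} (hX : IsUnit X)
    (h : Y * X = δ • 1) : X * Y = δ • 1 :=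
  hX.mul_right_cancel (by rw [mul_assoc, h, mul_smul_one, smul_one_mul])

section DualPair

variable {ι κ m R : Type*} [Fintype m] [CommRing R] {A B : ι → m → R}

def IsDualPair (A B : ι → m → R) : Prop :=
  ∀ i j k l, i ≠ j → i ≠ k → i ≠ l → j ≠ k → j ≠ l → k ≠ l → (A i - A j) ⬝ᵥ (B k - B l) = 0

lemma IsDualPair.symm (h : IsDualPair A B) : IsDualPair B A :=
  fun i j k l hij hik hil hjk hjl hkl => by
    rw [dotProduct_comm]
    exact h k l i j hkl hik.symm hjk.symm hil.symm hjl.symm hij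

def edgeMatrix (A : ι → m → R) (e : κ → ι) (p : ι) : Matrix κ m R :=
  of fun i => A (e i) - A p

lemma sum_mul_dotProduct_sub_eq_zero [Fintype ι] {α : ι → R} (hsum : ∑ i, α i = 0)
    (hdep : ∑ i, α i • A i = 0) (p : ι) (w : m → R) :
    ∑ k, α k * ((A k - A p) ⬝ᵥ w) = 0 := by
  have hdep' : ∑ k, α k • (A k - A p) = 0 := by
    simp only [smul_sub, sum_sub_distrib, ← sum_smul, hsum, hdep, zero_smul, sub_zero]
  simpa [sum_dotProduct, smul_dotProduct] using congrArg (· ⬝ᵥ w) hdep'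

lemma IsDualPair.mul_dotProduct_eq [Fintype ι] (h : IsDualPair A B) {α : ι → R}
    (hsum : ∑ i, α i = 0) (hdep : ∑ i, α i • A i = 0) {p q i : ι} (hpq : p ≠ q) (hip : i ≠ p)
    (hiq : i ≠ q) :
    α i * ((A i - A p) ⬝ᵥ (B i - B q)) = -(α q * ((A q - A p) ⬝ᵥ (B i - B q))) := by
  have hzero := sum_mul_dotProduct_sub_eq_zero hsum hdep p (B i - B q)
  rw [Fintype.sum_eq_add i q hiq] at hzero
  · exact eq_neg_of_add_eq_zero_left hzero
  rintro k ⟨hki, hkq⟩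
  by_cases hkp : k = p
  · simp [hkp]
  · rw [h k p i q hkp hki hkq hip.symm hpq hiq, mul_zero]

lemma IsDualPair.dotProduct_sub_eq (h : IsDualPair A B) {p q i j : ι} (hpq : p ≠ q)
    (hip : i ≠ p) (hiq : i ≠ q) (hjp : j ≠ p) (hjq : j ≠ q) :
    (A q - A p) ⬝ᵥ (B i - B q) = (A q - A p) ⬝ᵥ (B j - B q) := by
  by_cases hij : i = j
  · rw [hij]
  · rw [← sub_add_sub_cancel (B i) (B j) (B q), dotProduct_add,
      h q p i j hpq.symm hiq.symm hjq.symm hip.symm hjp.symm hij, zero_add]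

lemma diagonal_mul_edgeMatrix_mul_transpose_apply [Fintype κ] [DecidableEq κ] (α : ι → R)
    (e : κ → ι) (p q : ι) (i j : κ) :
    (diagonal (fun i => α (e i)) * edgeMatrix A e p * (edgeMatrix B e q)ᵀ) i j
      = α (e i) * ((A (e i) - A p) ⬝ᵥ (B (e j) - B q)) := by
  rw [Matrix.mul_assoc, diagonal_mul, mul_apply]
  simp [edgeMatrix, dotProduct]

theorem IsDualPair.exists_diagonal_mul_edgeMatrix_mul_transpose_eq_smul_one [Fintype ι]
    [Fintype κ] [DecidableEq κ] (h : IsDualPair A B) {α : ι → R} (hsum : ∑ i, α i = 0)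
    (hdep : ∑ i, α i • A i = 0) {e : κ → ι} (he : Function.Injective e) {p q : ι}
    (hpq : p ≠ q) (hp : ∀ i, e i ≠ p) (hq : ∀ i, e i ≠ q) :
    ∃ δ : R, diagonal (fun i => α (e i)) * edgeMatrix A e p * (edgeMatrix B e q)ᵀ = δ • 1 := by
  rcases isEmpty_or_nonempty κ with hκ | ⟨⟨z⟩⟩
  · exact ⟨0, Subsingleton.elim _ _⟩
  refine ⟨-(α q * ((A q - A p) ⬝ᵥ (B (e z) - B q))), ?_⟩
  ext i j
  rw [diagonal_mul_edgeMatrix_mul_transpose_apply, Matrix.smul_apply, one_apply]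
  split_ifs with hij
  · rw [hij, h.mul_dotProduct_eq hsum hdep hpq (hp j) (hq j),
      h.dotProduct_sub_eq hpq (hp j) (hq j) (hp z) (hq z), smul_eq_mul, mul_one]
  · rw [h (e i) p (e j) q (hp i) (he.ne hij) (hq i) (hp j).symm hpq (hq j), mul_zero,
      smul_zero]

lemma isUnit_edgeMatrix {K : Type*} [Field K] {A : ι → m → K} [DecidableEq m] {e : m → ι}
    (he : Function.Injective e) {p r : ι} (hpr : p ≠ r) (hp : ∀ i, e i ≠ p)
    (hr : ∀ i, e i ≠ r) (hA : AffineIndependent K fun j : {j // j ≠ r} => A j) :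
    IsUnit (edgeMatrix A e p) := by
  rw [← linearIndependent_rows_iff_isUnit]
  have hlin :=
    (affineIndependent_iff_linearIndependent_vsub K _ (⟨p, hpr⟩ : {j // j ≠ r})).1 hA
  refine hlin.comp (fun i => ⟨⟨e i, hr i⟩, fun h => hp i (congrArg Subtype.val h)⟩) ?_
  intro i j hij
  exact he (congrArg (fun x => x.val.val) hij)

def edgeGram [DecidableEq m] (A : ι → m → R) (α : ι → R) (e : m → ι) (p q : ι) :
    Matrix m m R :=
  (edgeMatrix A e q)ᵀ * diagonal (fun i => α (e i)) * edgeMatrix A e p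

theorem IsDualPair.exists_edgeGram_mul_edgeGram_eq_smul_one [Fintype ι] [DecidableEq m]
    (h : IsDualPair A B) {α : ι → R} (hsum : ∑ i, α i = 0) (hdepA : ∑ i, α i • A i = 0)
    (hdepB : ∑ i, α i • B i = 0) {e : m → ι} (he : Function.Injective e) {p q : ι}
    (hpq : p ≠ q) (hp : ∀ i, e i ≠ p) (hq : ∀ i, e i ≠ q) (hAq : IsUnit (edgeMatrix A e q)) :
    ∃ c : R, edgeGram A α e p q * edgeGram B α e p q = c • 1 := by
  obtain ⟨δ₁, h₁⟩ :=
    h.exists_diagonal_mul_edgeMatrix_mul_transpose_eq_smul_one hsum hdepA he hpq hp hq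
  obtain ⟨δ₂, h₂⟩ :=
    h.symm.exists_diagonal_mul_edgeMatrix_mul_transpose_eq_smul_one hsum hdepB he hpq hp hq
  have h₂' := ((isUnit_transpose _).2 hAq).mul_eq_smul_one_of_mul_eq_smul_one h₂
  refine ⟨δ₁ * δ₂, ?_⟩
  calc edgeGram A α e p q * edgeGram B α e p q
      = (edgeMatrix A e q)ᵀ
          * (diagonal (fun i => α (e i)) * edgeMatrix A e p * (edgeMatrix B e q)ᵀ)
          * (diagonal (fun i => α (e i)) * edgeMatrix B e p) := by
        simp only [edgeGram, mul_assoc]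
    _ = (δ₁ * δ₂) • 1 := by rw [h₁, mul_smul_one, smul_mul_assoc, h₂', smul_smul]

lemma isUnit_edgeGram {K : Type*} [Field K] [DecidableEq m] {A : ι → m → K} {α : ι → K}
    {e : m → ι} (he : Function.Injective e) (hα : ∀ i, α (e i) ≠ 0) {p q : ι} (hpq : p ≠ q)
    (hp : ∀ i, e i ≠ p) (hq : ∀ i, e i ≠ q)
    (hAp : AffineIndependent K fun j : {j // j ≠ p} => A j)
    (hAq : AffineIndependent K fun j : {j // j ≠ q} => A j) :
    IsUnit (edgeGram A α e p q) :=
  (((isUnit_transpose _).2 (isUnit_edgeMatrix he hpq.symm hq hp hAp)).mul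
    (isUnit_diagonal.2 (Pi.isUnit_iff.2 fun i => (hα i).isUnit))).mul
    (isUnit_edgeMatrix he hpq hp hq hAq)

end DualPair

/-- Duality of characteristic polynomials: if `M = C₂ᵀ D C₁` and `N = E₂ᵀ D E₁` come from
dual configurations `A`, `B` with common affine dependence coefficients `α`, then the
complex roots of the characteristic polynomial of `N` are `c/λ` for the roots `λ` of that
of `M` (for some nonzero constant `c`); in particular the `x^i` coefficient of one
vanishes iff the `x^{n-i}` coefficient of the other does. -/
theorem dual_characteristic_polynomial (n : ℕ) (hn : 2 ≤ n)
    (A B : Fin (n + 2) → (Fin n → ℝ))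
    (hA : ∀ i : Fin (n + 2),
      AffineIndependent ℝ (fun j : {j : Fin (n + 2) // j ≠ i} => A j.val))
    (hB : ∀ i : Fin (n + 2),
      AffineIndependent ℝ (fun j : {j : Fin (n + 2) // j ≠ i} => B j.val))
    (hdual : ∀ i j k l : Fin (n + 2), i ≠ j → i ≠ k → i ≠ l → j ≠ k → j ≠ l → k ≠ l →
      (A i - A j) ⬝ᵥ (B k - B l) = 0)
    (α : Fin (n + 2) → ℝ) (hα0 : ∀ i, α i ≠ 0) (hsum : ∑ i, α i = 0)
    (hdepA : ∑ i, α i • A i = 0) (hdepB : ∑ i, α i • B i = 0)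
    (C₁ C₂ E₁ E₂ D M N : Matrix (Fin n) (Fin n) ℝ)
    (hC₁ : C₁ = Matrix.of fun i j => (A (Fin.castAdd 2 i) - A ⟨n, by omega⟩) j)
    (hC₂ : C₂ = Matrix.of fun i j => (A (Fin.castAdd 2 i) - A (Fin.last (n + 1))) j)
    (hE₁ : E₁ = Matrix.of fun i j => (B (Fin.castAdd 2 i) - B ⟨n, by omega⟩) j)
    (hE₂ : E₂ = Matrix.of fun i j => (B (Fin.castAdd 2 i) - B (Fin.last (n + 1))) j)
    (hD : D = Matrix.diagonal fun i => α (Fin.castAdd 2 i))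
    (hM : M = C₂ᵀ * D * C₁) (hN : N = E₂ᵀ * D * E₁) :
    ∃ c : ℂ, c ≠ 0 ∧
      (N.charpoly.map (algebraMap ℝ ℂ)).roots
        = (M.charpoly.map (algebraMap ℝ ℂ)).roots.map (fun l => c / l) ∧
      ∀ i : ℕ, i ≤ n → (M.charpoly.coeff i = 0 ↔ N.charpoly.coeff (n - i) = 0) := by
  set p : Fin (n + 2) := ⟨n, by omega⟩
  set q : Fin (n + 2) := Fin.last (n + 1)
  have hpq : p ≠ q := by simp [p, q, Fin.ext_iff]
  have hp : ∀ i : Fin n, Fin.castAdd 2 i ≠ p := fun i => by simp [p, Fin.ext_iff]; omega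
  have hq : ∀ i : Fin n, Fin.castAdd 2 i ≠ q := fun i => by simp [q, Fin.ext_iff]; omega
  have he := Fin.castAdd_injective n 2
  have hMA : M = edgeGram A α (Fin.castAdd 2) p q := by rw [hM, hC₁, hC₂, hD]; rfl
  have hNB : N = edgeGram B α (Fin.castAdd 2) p q := by rw [hN, hE₁, hE₂, hD]; rfl
  obtain ⟨c, hMN⟩ : ∃ c : ℝ, M * N = c • 1 := hMA ▸ hNB ▸
    IsDualPair.exists_edgeGram_mul_edgeGram_eq_smul_one hdual hsum hdepA hdepB he hpq hp hq
      (isUnit_edgeMatrix he hpq.symm hq hp (hA p))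
  have hMu : IsUnit M := hMA ▸ isUnit_edgeGram he (fun _ => hα0 _) hpq hp hq (hA p) (hA q)
  have hNu : IsUnit N := hNB ▸ isUnit_edgeGram he (fun _ => hα0 _) hpq hp hq (hB p) (hB q)
  have hc : c ≠ 0 := by
    have : Nonempty (Fin n) := ⟨⟨0, by omega⟩⟩
    rintro rfl
    rw [zero_smul] at hMN
    exact not_isUnit_zero (hMN ▸ hMu.mul hNu)
  refine ⟨c, by exact_mod_cast hc, ?_, fun i hi => ?_⟩
  · rw [← charpoly_map, ← charpoly_map]
    exact roots_charpoly_of_mul_eq_smul_one (hMu.map (algebraMap ℝ ℂ).mapMatrix)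
      (by exact_mod_cast hc) (map_mul_map_eq_smul_one _ hMN)
  · have hNM := hNu.mul_eq_smul_one_of_mul_eq_smul_one hMN
    simpa using coeff_charpoly_eq_zero_iff_of_mul_eq_smul_one hNu hc hNM (j := i)
      (by simpa using hi)
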